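/- arXiv:1112.2312 — 2 statements merged into one kernel-verified Lean document; each statement's English description precedes it below -/
import Mathlib

section
/- If an acyclic digraph D has only finitely many equivalence classes of rays, then D contains no multiray. -/
/-- A directed simple path of length `n` in the digraph with arrow relation `A`:
a sequence `p 0, …, p n` of pairwise distinct vertices with an arrow from each
vertex to the next. -/
def IsPathOn {V : Type*} (A : V → V → Prop) (n : ℕ) (p : ℕ → V) : Prop :=
  (∀ i j, i ≤ n → j ≤ n → p i = p j → i = j) ∧ ∀ i, i < n → A (p i) (p (i + 1))

/-- A digraph is acyclic if no directed simple path can be closed up by an arrow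
from its last vertex to its first. -/
def DAcyclic {V : Type*} (A : V → V → Prop) : Prop :=
  ¬ ∃ (n : ℕ) (p : ℕ → V), IsPathOn A n p ∧ A (p n) (p 0)

/-- A (directed) ray: pairwise distinct vertices `r 0, r 1, …` with an arrow from
`r i` to `r (i+1)` for every `i`. -/
def IsRay {V : Type*} (A : V → V → Prop) (r : ℕ → V) : Prop :=
  Function.Injective r ∧ ∀ i : ℕ, A (r i) (r (i + 1))

/-- A digraph is rayless if it contains no ray. -/
def Rayless {V : Type*} (A : V → V → Prop) : Prop := ¬ ∃ r : ℕ → V, IsRay A r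

/-- Two rays are equivalent if they coincide from some point on. -/
def RayEquiv {V : Type*} (r s : ℕ → V) : Prop :=
  ∃ M N : ℕ, ∀ i : ℕ, r (M + i) = s (N + i)

/-- The ray `r` has a bypass starting at `r n`: a directed simple path, not
contained in `r`, from `r n` to `r (n + k)` for some `k > 0`. -/
def HasBypassAt {V : Type*} (A : V → V → Prop) (r : ℕ → V) (n : ℕ) : Prop :=
  ∃ k : ℕ, 0 < k ∧ ∃ (m : ℕ) (p : ℕ → V), IsPathOn A m p ∧ p 0 = r n ∧
    p m = r (n + k) ∧ ∃ i ≤ m, ∀ j : ℕ, p i ≠ r j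

/-- A multiray: a ray having bypasses starting arbitrarily far along it. -/
def IsMultiray {V : Type*} (A : V → V → Prop) (r : ℕ → V) : Prop :=
  IsRay A r ∧ ∀ N : ℕ, ∃ i : ℕ, HasBypassAt A r (N + i)

/-- The family of equivalence classes of rays of the digraph `A`. -/
def RayClasses {V : Type*} (A : V → V → Prop) : Set (Set (ℕ → V)) :=
  {C | ∃ r : ℕ → V, IsRay A r ∧ C = {s | IsRay A s ∧ RayEquiv r s}}

section Poset

variable {P : Type*} [PartialOrder P]

/-- A chain contained in the principal ideal `x↓`. -/
def IsChainIn (x : P) (C : Set P) : Prop := C ⊆ Set.Iic x ∧ IsChain (· ≤ ·) C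

/-- A maximal chain in the principal ideal `x↓`. -/
def IsMaxChainIn (x : P) (C : Set P) : Prop :=
  IsChainIn x C ∧ ∀ D : Set P, IsChainIn x D → C ⊆ D → C = D

/-- `P` is graded with degree function `deg`: for every `x`, every maximal chain
in `x↓` is finite of length `deg x` (i.e. cardinality `deg x + 1`). -/
def GradedDeg (deg : P → ℕ) : Prop :=
  ∀ x : P, ∀ C : Set P, IsMaxChainIn x C → C.Finite ∧ C.ncard = deg x + 1

/-- A matching on the Hasse diagram of `P`: a set of arrows `(x, y)` (where `x`
covers `y`) no two of which share a vertex. -/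
def IsMatching (M : Set (P × P)) : Prop :=
  (∀ e ∈ M, e.2 ⋖ e.1) ∧
  ∀ e ∈ M, ∀ f ∈ M, e ≠ f → e.1 ≠ f.1 ∧ e.1 ≠ f.2 ∧ e.2 ≠ f.1 ∧ e.2 ≠ f.2

/-- The arrow relation of the digraph `H_M(P)`, obtained from the Hasse diagram
of `P` by reversing the arrows belonging to `M`. -/
def HasseM (M : Set (P × P)) (x y : P) : Prop :=
  (y ⋖ x ∧ (x, y) ∉ M) ∨ (y, x) ∈ M

/-- A Morse matching: a matching `M` on the Hasse diagram such that `H_M(P)` is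
acyclic. -/
def IsMorse (M : Set (P × P)) : Prop := IsMatching M ∧ DAcyclic (HasseM M)

/-- An element is critical for `M` if it is matched with no other element. -/
def Critical (M : Set (P × P)) (x : P) : Prop := ∀ e ∈ M, e.1 ≠ x ∧ e.2 ≠ x

/-- The set of critical elements of the matching `M`. -/
def Crit (M : Set (P × P)) : Set P := {x | Critical M x}

/-- The degree of a ray `r`: the minimal degree of an element appearing on `r`. -/
noncomputable def rayDeg (deg : P → ℕ) (r : ℕ → P) : ℕ := sInf {i | ∃ j : ℕ, deg (r j) = i}

/-- `M₊(x)`: if `x` is matched with an element `z` of degree `deg x + 1`, the set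
of elements `y ≠ x` covered by `z`; otherwise empty. -/
def Mplus (M : Set (P × P)) (deg : P → ℕ) (x : P) : Set P :=
  {y | ∃ z : P, (z, x) ∈ M ∧ deg z = deg x + 1 ∧ y ≠ x ∧ y ⋖ z}

/-- The stages `Dₖ(x)` of the construction of `D_M(x)`. -/
def Dk (M : Set (P × P)) (deg : P → ℕ) (x : P) : ℕ → Set P
  | 0 => {x}
  | (k + 1) => Dk M deg x k ∪ ⋃ y ∈ Dk M deg x k, Mplus M deg y

/-- The vertex set of the digraph `D_M(x)`. -/
def Dset (M : Set (P × P)) (deg : P → ℕ) (x : P) : Set P := ⋃ k : ℕ, Dk M deg x k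

/-- The arrow relation of the digraph `D_M(x)`: an arrow from `y` to each element
of `M₊(y)`. -/
def DArrow (M : Set (P × P)) (deg : P → ℕ) (x : P) (y z : P) : Prop :=
  y ∈ Dset M deg x ∧ z ∈ Mplus M deg y

/-- `L_M(x)`: the length of the longest directed simple path in `D_M(x)`. -/
noncomputable def LM (M : Set (P × P)) (deg : P → ℕ) (x : P) : ℕ :=
  sSup {n | ∃ p : ℕ → P, IsPathOn (DArrow M deg x) n p ∧ ∀ i ≤ n, p i ∈ Dset M deg x}

end Poset

/-!
Along a multiray `r` one finds infinitely many bypasses, one after the other, whose inner vertices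
avoid `r`; acyclicity makes each of them end further along `r` than it starts and makes the
interiors of distinct bypasses disjoint. For a set `T` of indices, following `r` and taking
exactly the bypasses indexed by `T` gives a ray. If `T \ T'` is infinite, the inner vertices of
the bypasses indexed by `T \ T'` lie on the ray of `T` but not on that of `T'`, so the two rays
are not equivalent. Infinitely many index sets with pairwise infinite differences thus give
infinitely many classes of rays.
-/

open Relation

section Walks

variable {V : Type*} {A : V → V → Prop}

def IsWalkOn (A : V → V → Prop) (l : ℕ) (w : ℕ → V) : Prop := ∀ i < l, A (w i) (w (i + 1))

theorem IsRay.isWalkOn {r : ℕ → V} (hr : IsRay A r) (l : ℕ) : IsWalkOn A l r :=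
  fun i _ => hr.2 i

theorem IsWalkOn.transGen {l : ℕ} {w : ℕ → V} (hw : IsWalkOn A l w) {i j : ℕ} (hij : i < j)
    (hj : j ≤ l) : TransGen A (w i) (w j) := by
  induction j, hij using Nat.le_induction with
  | base => exact .single (hw i (by omega))
  | succ j hij ih => exact (ih (by omega)).tail (hw j (by omega))

theorem IsWalkOn.reflTransGen {l : ℕ} {w : ℕ → V} (hw : IsWalkOn A l w) {i j : ℕ} (hij : i ≤ j)
    (hj : j ≤ l) : ReflTransGen A (w i) (w j) := by
  rcases hij.eq_or_lt with rfl | hlt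
  · exact .refl
  · exact (hw.transGen hlt hj).to_reflTransGen

def walkAppend (l : ℕ) (w₁ w₂ : ℕ → V) (x : ℕ) : V := if x ≤ l then w₁ x else w₂ (x - l)

theorem walkAppend_of_le {l x : ℕ} (w₁ w₂ : ℕ → V) (h : x ≤ l) : walkAppend l w₁ w₂ x = w₁ x :=
  if_pos h

theorem walkAppend_add {l : ℕ} {w₁ w₂ : ℕ → V} (h : w₁ l = w₂ 0) (x : ℕ) :
    walkAppend l w₁ w₂ (l + x) = w₂ x := by
  rcases x.eq_zero_or_pos with rfl | hx
  · simpa [walkAppend] using h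
  · simp [walkAppend, show ¬ l + x ≤ l by omega]

theorem IsWalkOn.append {l₁ l₂ : ℕ} {w₁ w₂ : ℕ → V} (h₁ : IsWalkOn A l₁ w₁)
    (h₂ : IsWalkOn A l₂ w₂) (h : w₁ l₁ = w₂ 0) : IsWalkOn A (l₁ + l₂) (walkAppend l₁ w₁ w₂) := by
  intro i hi
  by_cases hil : i < l₁
  · rw [walkAppend_of_le _ _ hil.le, walkAppend_of_le _ _ hil]
    exact h₁ i hil
  · obtain ⟨j, rfl⟩ := Nat.exists_eq_add_of_le (not_lt.mp hil)
    rw [walkAppend_add h, Nat.add_assoc, walkAppend_add h]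
    exact h₂ j (by omega)

theorem IsPathOn.mono {n m : ℕ} {p : ℕ → V} (hp : IsPathOn A n p) (hmn : m ≤ n) :
    IsPathOn A m p :=
  ⟨fun i j hi hj => hp.1 i j (hi.trans hmn) (hj.trans hmn), fun i hi => hp.2 i (by omega)⟩

theorem exists_isPathOn_of_reflTransGen {u v : V} (h : ReflTransGen A u v) :
    ∃ n p, IsPathOn A n p ∧ p 0 = u ∧ p n = v := by
  induction h with
  | refl => exact ⟨0, fun _ => u, ⟨fun i j hi hj _ => by omega, fun i hi => by omega⟩, rfl, rfl⟩
  | @tail w v _ hwv ih =>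
    obtain ⟨n, p, hp, hp0, hpn⟩ := ih
    by_cases hv : ∃ i ≤ n, p i = v
    · obtain ⟨i, hi, hpi⟩ := hv
      exact ⟨i, p, hp.mono hi, hp0, hpi⟩
    · push Not at hv
      refine ⟨n + 1, fun x => if x ≤ n then p x else v, ⟨fun i j hi hj hij => ?_, fun i hi => ?_⟩,
        by simpa using hp0, by simp⟩
      · by_cases hin : i ≤ n <;> by_cases hjn : j ≤ n <;> simp only [hin, hjn, if_true,
          if_false] at hij
        · exact hp.1 i j hin hjn hij
        · exact absurd hij (hv i hin)
        · exact absurd hij.symm (hv j hjn)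
        · omega
      · rcases (Nat.lt_succ_iff.mp hi).lt_or_eq with hlt | rfl
        · simpa [hlt.le, Nat.succ_le_of_lt hlt] using hp.2 i hlt
        · simpa [hpn] using hwv

theorem DAcyclic.not_transGen_self (hacyc : DAcyclic A) (v : V) : ¬ TransGen A v v := by
  intro h
  obtain ⟨w, hvw, hwv⟩ := TransGen.head'_iff.mp h
  obtain ⟨n, p, hp, hp0, hpn⟩ := exists_isPathOn_of_reflTransGen hwv
  exact hacyc ⟨n, p, hp, by rwa [hp0, hpn]⟩

theorem IsRay.le_of_reflTransGen (hacyc : DAcyclic A) {r : ℕ → V} (hr : IsRay A r) {i j : ℕ}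
    (h : ReflTransGen A (r i) (r j)) : i ≤ j := by
  by_contra! hji
  exact hacyc.not_transGen_self _ (TransGen.trans_right h ((hr.isWalkOn i).transGen hji le_rfl))

theorem IsRay.lt_of_transGen (hacyc : DAcyclic A) {r : ℕ → V} (hr : IsRay A r) {i j : ℕ}
    (h : TransGen A (r i) (r j)) : i < j := by
  by_contra! hji
  exact hacyc.not_transGen_self _ (h.trans_left ((hr.isWalkOn i).reflTransGen hji le_rfl))

theorem isRay_of_forall_rel_succ (hacyc : DAcyclic A) {f : ℕ → V}
    (hf : ∀ n, A (f n) (f (n + 1))) : IsRay A f := by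
  refine ⟨fun i j hij => ?_, hf⟩
  by_contra hne
  have hcycle {i j : ℕ} (hlt : i < j) (heq : f i = f j) : False := by
    have h := Nat.rel_of_forall_rel_succ_of_lt (TransGen A) (fun n => .single (hf n)) hlt
    rw [heq] at h
    exact hacyc.not_transGen_self _ h
  rcases Nat.lt_or_gt_of_ne hne with hlt | hlt
  · exact hcycle hlt hij
  · exact hcycle hlt hij.symm

theorem RayEquiv.finite_range_diff {r s : ℕ → V} (h : RayEquiv r s) :
    (Set.range r \ Set.range s).Finite := by
  obtain ⟨M, N, h⟩ := h
  refine ((Set.finite_Iio M).image r).subset ?_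
  rintro _ ⟨⟨i, rfl⟩, hi⟩
  refine ⟨i, Set.mem_Iio.mpr (lt_of_not_ge fun hMi => ?_), rfl⟩
  obtain ⟨j, rfl⟩ := Nat.exists_eq_add_of_le hMi
  exact hi ⟨N + j, (h j).symm⟩

end Walks

theorem Nat.exists_gap_around {P : ℕ → Prop} {i l : ℕ} (h0 : P 0) (hl : P l) (hi : ¬ P i)
    (hil : i ≤ l) : ∃ a b, a < i ∧ i < b ∧ b ≤ l ∧ P a ∧ P b ∧ ∀ x, a < x → x < b → ¬ P x := by
  classical
  have hlt : i < l := hil.lt_of_ne (by rintro rfl; exact hi hl)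
  have hb : ∃ b, i < b ∧ P b := ⟨l, hlt, hl⟩
  have ha_le : Nat.findGreatest P i ≤ i := Nat.findGreatest_le i
  have hPa : P (Nat.findGreatest P i) := Nat.findGreatest_spec (Nat.zero_le i) h0
  refine ⟨Nat.findGreatest P i, Nat.find hb, ha_le.lt_of_ne (fun h => hi (h ▸ hPa)),
    (Nat.find_spec hb).1, Nat.find_min' hb ⟨hlt, hl⟩, hPa, (Nat.find_spec hb).2, ?_⟩
  intro x hax hxb hx
  rcases le_or_gt x i with hxi | hix
  · exact Nat.findGreatest_is_greatest hax hxi hx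
  · exact Nat.find_min hb hxb ⟨hix, hx⟩

section Bypass

variable {V : Type*} {A : V → V → Prop}

/-- Unlike the paths of `HasBypassAt`, the walk need not be simple; instead all its inner
vertices avoid `r`. -/
structure Bypass (A : V → V → Prop) (r : ℕ → V) where
  src : ℕ
  tgt : ℕ
  len : ℕ
  walk : ℕ → V
  src_lt_tgt : src < tgt
  two_le_len : 2 ≤ len
  isWalkOn : IsWalkOn A len walk
  walk_zero : walk 0 = r src
  walk_len : walk len = r tgt
  walk_not_mem_range : ∀ i, 0 < i → i < len → walk i ∉ Set.range r

theorem HasBypassAt.exists_bypass (hacyc : DAcyclic A) {r : ℕ → V} (hr : IsRay A r) {n : ℕ}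
    (h : HasBypassAt A r n) : ∃ β : Bypass A r, n ≤ β.src := by
  obtain ⟨k, -, m, p, hp, hp0, hpm, i, him, hi⟩ := h
  have hw : IsWalkOn A m p := hp.2
  obtain ⟨a, b, hai, hib, hbm, ⟨ja, hja⟩, ⟨jb, hjb⟩, hgap⟩ :=
    Nat.exists_gap_around (P := fun x => p x ∈ Set.range r) ⟨n, hp0.symm⟩ ⟨n + k, hpm.symm⟩
      (by rintro ⟨j, hj⟩; exact hi j hj.symm) him
  have hsrc : n ≤ ja := hr.le_of_reflTransGen hacyc (by
    simpa [← hp0, ← hja] using hw.reflTransGen (Nat.zero_le a) (by omega))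
  have hlt : ja < jb := hr.lt_of_transGen hacyc (by
    simpa [← hja, ← hjb] using hw.transGen (hai.trans hib) hbm)
  refine ⟨{
    src := ja
    tgt := jb
    len := b - a
    walk := fun x => p (a + x)
    src_lt_tgt := hlt
    two_le_len := by omega
    isWalkOn := fun x hx => by simpa [Nat.add_assoc] using hw (a + x) (by omega)
    walk_zero := by simpa using hja.symm
    walk_len := by simpa [Nat.add_sub_cancel' (by omega : a ≤ b)] using hjb.symm
    walk_not_mem_range := fun x hx0 hx => hgap (a + x) (by omega) (by omega) }, hsrc⟩

theorem IsMultiray.exists_bypass_seq (hacyc : DAcyclic A) {r : ℕ → V} (hr : IsMultiray A r) :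
    ∃ β : ℕ → Bypass A r, ∀ t, (β t).tgt ≤ (β (t + 1)).src := by
  have hβ (N : ℕ) : ∃ β : Bypass A r, N ≤ β.src := by
    obtain ⟨i, hi⟩ := hr.2 N
    obtain ⟨β, hβ⟩ := hi.exists_bypass hacyc hr.1
    exact ⟨β, by omega⟩
  choose f hf using hβ
  exact ⟨fun t => Nat.rec (f 0) (fun _ β => f β.tgt) t, fun t => hf _⟩

variable {r : ℕ → V} {β : ℕ → Bypass A r}

theorem Bypass.tgt_le_src_of_lt (hβ : ∀ t, (β t).tgt ≤ (β (t + 1)).src) {t t' : ℕ}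
    (h : t < t') : (β t).tgt ≤ (β t').src := by
  induction t', h using Nat.le_induction with
  | base => exact hβ t
  | succ t' _ ih => exact ih.trans (((β t').src_lt_tgt).le.trans (hβ t'))

theorem Bypass.transGen_walk_of_lt (hr : IsRay A r) (hβ : ∀ t, (β t).tgt ≤ (β (t + 1)).src)
    {t t' i i' : ℕ} (htt' : t < t') (hi : i ≤ (β t).len) (hi'0 : 0 < i')
    (hi' : i' ≤ (β t').len) : TransGen A ((β t).walk i) ((β t').walk i') := by
  have h₁ : ReflTransGen A ((β t).walk i) (r (β t).tgt) :=
    (β t).walk_len ▸ (β t).isWalkOn.reflTransGen hi le_rfl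
  have h₂ : ReflTransGen A (r (β t).tgt) (r (β t').src) :=
    (hr.isWalkOn _).reflTransGen (Bypass.tgt_le_src_of_lt hβ htt') le_rfl
  have h₃ : TransGen A (r (β t').src) ((β t').walk i') :=
    (β t').walk_zero ▸ (β t').isWalkOn.transGen hi'0 hi'
  exact TransGen.trans_right (h₁.trans h₂) h₃

theorem Bypass.walk_ne_walk (hacyc : DAcyclic A) (hr : IsRay A r)
    (hβ : ∀ t, (β t).tgt ≤ (β (t + 1)).src) {t t' i i' : ℕ} (htt' : t ≠ t') (hi0 : 0 < i)
    (hi : i < (β t).len) (hi'0 : 0 < i') (hi' : i' < (β t').len) :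
    (β t).walk i ≠ (β t').walk i' := by
  intro heq
  rcases Nat.lt_or_gt_of_ne htt' with hlt | hlt
  · have h := Bypass.transGen_walk_of_lt hr hβ hlt hi.le hi'0 hi'.le
    rw [heq] at h
    exact hacyc.not_transGen_self _ h
  · have h := Bypass.transGen_walk_of_lt hr hβ hlt hi'.le hi0 hi.le
    rw [heq] at h
    exact hacyc.not_transGen_self _ h

end Bypass

section Concat

variable {V : Type*} {A : V → V → Prop}

/-- The position (block, offset) of the `n`-th vertex of the concatenation of blocks of lengths
`L 0, L 1, …`; the last vertex of each block is identified with the first of the next one. -/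
def concatPos (L : ℕ → ℕ) : ℕ → ℕ × ℕ
  | 0 => (0, 0)
  | n + 1 =>
    let p := concatPos L n
    if p.2 + 1 < L p.1 then (p.1, p.2 + 1) else (p.1 + 1, 0)

def concatSeq (L : ℕ → ℕ) (w : ℕ → ℕ → V) (n : ℕ) : V :=
  w (concatPos L n).1 (concatPos L n).2

variable {L : ℕ → ℕ}

theorem concatPos_succ_of_eq {n t i : ℕ} (h : concatPos L n = (t, i)) :
    concatPos L (n + 1) = if i + 1 < L t then (t, i + 1) else (t + 1, 0) := by
  simp only [concatPos, h]

variable (hL : ∀ t, 0 < L t)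
include hL

theorem concatPos_snd_lt (n : ℕ) : (concatPos L n).2 < L (concatPos L n).1 := by
  induction n with
  | zero => exact hL 0
  | succ n _ =>
    simp only [concatPos]
    split_ifs with h
    · exact h
    · exact hL _

theorem concatPos_add {n t : ℕ} (h : concatPos L n = (t, 0)) :
    (∀ i < L t, concatPos L (n + i) = (t, i)) ∧ concatPos L (n + L t) = (t + 1, 0) := by
  have hblock : ∀ i < L t, concatPos L (n + i) = (t, i) := by
    intro i hi
    induction i with
    | zero => exact h
    | succ i ih =>
      rw [← Nat.add_assoc, concatPos_succ_of_eq (ih (by omega)), if_pos hi]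
  refine ⟨hblock, ?_⟩
  obtain ⟨l, hl⟩ := Nat.exists_eq_add_one_of_ne_zero (hL t).ne'
  rw [hl, ← Nat.add_assoc, concatPos_succ_of_eq (hblock l (by omega)), hl, if_neg (lt_irrefl _)]

theorem exists_concatPos_eq (t : ℕ) : ∃ n, concatPos L n = (t, 0) := by
  induction t with
  | zero => exact ⟨0, rfl⟩
  | succ t ih =>
    obtain ⟨n, hn⟩ := ih
    exact ⟨_, (concatPos_add hL hn).2⟩

theorem mem_range_concatSeq (w : ℕ → ℕ → V) {t i : ℕ} (hi : i < L t) :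
    w t i ∈ Set.range (concatSeq L w) := by
  obtain ⟨n, hn⟩ := exists_concatPos_eq hL t
  exact ⟨n + i, by simp [concatSeq, (concatPos_add hL hn).1 i hi]⟩

theorem concatSeq_rel {w : ℕ → ℕ → V} (hw : ∀ t, IsWalkOn A (L t) (w t))
    (hlink : ∀ t, w t (L t) = w (t + 1) 0) (n : ℕ) :
    A (concatSeq L w n) (concatSeq L w (n + 1)) := by
  rcases hp : concatPos L n with ⟨t, i⟩
  have hlt : i < L t := by simpa [hp] using concatPos_snd_lt hL n
  simp only [concatSeq, concatPos_succ_of_eq hp, hp]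
  split_ifs with h
  · exact hw t i hlt
  · rw [← hlink t, ← show i + 1 = L t by omega]
    exact hw t i hlt

end Concat

section Splice

variable {V : Type*} {A : V → V → Prop}

variable {r : ℕ → V} (β : ℕ → Bypass A r) (T : Set ℕ) [DecidablePred (· ∈ T)]

def spliceLen (t : ℕ) : ℕ :=
  if t ∈ T then (β t).len + ((β (t + 1)).src - (β t).tgt) else (β (t + 1)).src - (β t).src

/-- The stretch from `r (β t).src` to `r (β (t + 1)).src`: along `r`, or through `β t` if
`t ∈ T`. -/
def spliceBlock (t : ℕ) : ℕ → V :=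
  if t ∈ T then walkAppend (β t).len (β t).walk (fun x => r ((β t).tgt + x))
  else fun x => r ((β t).src + x)

def splice : ℕ → V := concatSeq (spliceLen β T) (spliceBlock β T)

variable {β T}

theorem spliceBlock_zero (t : ℕ) : spliceBlock β T t 0 = r (β t).src := by
  unfold spliceBlock
  split_ifs
  · exact (walkAppend_of_le _ _ (Nat.zero_le _)).trans (β t).walk_zero
  · simp

theorem spliceBlock_mem (t x : ℕ) :
    spliceBlock β T t x ∈ Set.range r ∨
      t ∈ T ∧ 0 < x ∧ x < (β t).len ∧ spliceBlock β T t x = (β t).walk x := by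
  unfold spliceBlock
  split_ifs with ht
  · rcases x.eq_zero_or_pos with rfl | hx0
    · exact .inl ⟨_, ((walkAppend_of_le _ _ (Nat.zero_le _)).trans (β t).walk_zero).symm⟩
    rcases lt_or_ge x (β t).len with hx | hx
    · exact .inr ⟨ht, hx0, hx, walkAppend_of_le _ _ hx.le⟩
    · obtain ⟨y, rfl⟩ := Nat.exists_eq_add_of_le hx
      exact .inl ⟨_, (walkAppend_add (w₂ := fun x => r ((β t).tgt + x)) (β t).walk_len y).symm⟩
  · exact .inl ⟨_, rfl⟩

theorem splice_mem (n : ℕ) :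
    splice β T n ∈ Set.range r ∨
      ∃ t ∈ T, ∃ i, 0 < i ∧ i < (β t).len ∧ splice β T n = (β t).walk i :=
  (spliceBlock_mem _ _).imp_right fun ⟨ht, hi0, hi, heq⟩ => ⟨_, ht, _, hi0, hi, heq⟩

theorem isWalkOn_spliceBlock (hr : IsRay A r) (t : ℕ) :
    IsWalkOn A (spliceLen β T t) (spliceBlock β T t) := by
  have hrwalk (a : ℕ) (l : ℕ) : IsWalkOn A l (fun x => r (a + x)) := fun i _ => hr.2 (a + i)
  unfold spliceLen spliceBlock
  split_ifs
  · exact (β t).isWalkOn.append (hrwalk _ _) (by simpa using (β t).walk_len)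
  · exact hrwalk _ _

variable (hβ : ∀ t, (β t).tgt ≤ (β (t + 1)).src)
include hβ

theorem spliceLen_pos (t : ℕ) : 0 < spliceLen β T t := by
  have := (β t).two_le_len
  have := (β t).src_lt_tgt
  have := hβ t
  unfold spliceLen
  split_ifs <;> omega

theorem spliceBlock_spliceLen (t : ℕ) :
    spliceBlock β T t (spliceLen β T t) = r (β (t + 1)).src := by
  have := (β t).src_lt_tgt
  have := hβ t
  unfold spliceLen spliceBlock
  split_ifs
  · rw [walkAppend_add (by simpa using (β t).walk_len)]
    exact congrArg r (Nat.add_sub_cancel' (hβ t))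
  · exact congrArg r (Nat.add_sub_cancel' (by omega))

theorem isRay_splice (hacyc : DAcyclic A) (hr : IsRay A r) : IsRay A (splice β T) :=
  isRay_of_forall_rel_succ hacyc <| concatSeq_rel (spliceLen_pos hβ) (isWalkOn_spliceBlock hr)
    fun t => (spliceBlock_spliceLen hβ t).trans (spliceBlock_zero (t + 1)).symm

theorem walk_one_mem_range_splice {t : ℕ} (ht : t ∈ T) :
    (β t).walk 1 ∈ Set.range (splice β T) := by
  have h2 := (β t).two_le_len
  have h1 : 1 < spliceLen β T t := by
    simp only [spliceLen, if_pos ht]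
    omega
  have := mem_range_concatSeq (spliceLen_pos hβ) (spliceBlock β T) h1
  rwa [spliceBlock, if_pos ht, walkAppend_of_le _ _ (by omega)] at this

theorem walk_one_not_mem_range_splice (hacyc : DAcyclic A) (hr : IsRay A r) {t : ℕ}
    (ht : t ∉ T) : (β t).walk 1 ∉ Set.range (splice β T) := by
  rintro ⟨n, hn⟩
  have h1 : 1 < (β t).len := (β t).two_le_len
  rcases splice_mem (β := β) (T := T) n with hmem | ⟨t', ht', i, hi0, hi, heq⟩
  · exact (β t).walk_not_mem_range 1 one_pos h1 (hn ▸ hmem)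
  · exact Bypass.walk_ne_walk hacyc hr hβ (fun h : t = t' => ht (h ▸ ht')) one_pos h1 hi0 hi
      (hn ▸ heq)

theorem not_rayEquiv_splice (hacyc : DAcyclic A) (hr : IsRay A r) {T' : Set ℕ}
    [DecidablePred (· ∈ T')] (hTT' : (T \ T').Infinite) :
    ¬ RayEquiv (splice β T) (splice β T') := by
  intro h
  have hinj : Set.InjOn (fun t => (β t).walk 1) (T \ T') := fun t _ t' _ heq => by
    by_contra hne
    exact Bypass.walk_ne_walk hacyc hr hβ hne one_pos (β t).two_le_len one_pos
      (β t').two_le_len heq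
  have hmaps : Set.MapsTo (fun t => (β t).walk 1) (T \ T')
      (Set.range (splice β T) \ Set.range (splice β T')) := fun t ht =>
    ⟨walk_one_mem_range_splice hβ ht.1, walk_one_not_mem_range_splice hβ hacyc hr ht.2⟩
  exact Set.infinite_of_injOn_mapsTo hinj hmaps hTT' h.finite_range_diff

end Splice

theorem Nat.infinite_setOf_unpair_fst_diff {a b : ℕ} (hab : a ≠ b) :
    ({t | (Nat.unpair t).1 = a} \ {t | (Nat.unpair t).1 = b}).Infinite := by
  refine (Set.infinite_range_of_injective (f := Nat.pair a) fun x y h => ?_).mono ?_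
  · simpa using congrArg (fun t => (Nat.unpair t).2) h
  · rintro _ ⟨x, rfl⟩
    simp [hab]

theorem stmt2_general {V : Type*} (A : V → V → Prop)
    (hacyc : DAcyclic A) (hfin : (RayClasses A).Finite) :
    ¬ ∃ r : ℕ → V, IsMultiray A r := by
  rintro ⟨r, hr⟩
  obtain ⟨β, hβ⟩ := hr.exists_bypass_seq hacyc
  -- the index sets `T ν` partition `ℕ` into infinitely many infinite pieces
  let T (ν : ℕ) : Set ℕ := {t | (Nat.unpair t).1 = ν}
  let cls (ν : ℕ) : Set (ℕ → V) := {s | IsRay A s ∧ RayEquiv (splice β (T ν)) s}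
  refine Set.infinite_of_injective_forall_mem (f := cls) (fun a b hab => ?_)
    (fun ν => Set.mem_ofPred.mpr ⟨_, isRay_splice hβ hacyc hr.1, rfl⟩) hfin
  by_contra hne
  have hb : splice β (T b) ∈ cls a := by
    rw [hab]
    exact ⟨isRay_splice hβ hacyc hr.1, 0, 0, fun _ => rfl⟩
  exact not_rayEquiv_splice hβ hacyc hr.1 (Nat.infinite_setOf_unpair_fst_diff hne) hb.2

/-- If an acyclic digraph `D` has only finitely many equivalence
classes of rays, then `D` contains no multiray. -/
theorem stmt2 {V : Type*} (A : V → V → Prop) (hirr : Irreflexive A)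
    (hacyc : DAcyclic A) (hfin : (RayClasses A).Finite) :
    ¬ ∃ r : ℕ → V, IsMultiray A r :=
  stmt2_general A hacyc hfin
end

section
/- Let P be a graded poset in which every element has degree at most 1 and every element of degree 1 covers exactly two distinct elements of degree 0 (i.e. P is the face poset of a 1-dimensional regular CW-complex), and let M′ be a Morse matching on P. Then there exists a rayless Morse matching M on P such that C_M(P) = C_{M′}(P) ∪ {c_{[r]} : [r] ∈ R_{M′}(P)}, where the c_{[r]} are elements of P \ C_{M′}(P), c_{[r]} ≠ c_{[r′]} whenever [r] ≠ [r′], and deg(c_{[r]}) = 0 for all [r]. (No finiteness assumption on R_{M′}(P) is made.) -/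
/-- `P` is the face poset of a 1-dimensional regular CW-complex: every element
has degree at most 1 and every element of degree 1 covers exactly two distinct
elements of degree 0. -/
def OneDim {P : Type*} [PartialOrder P] (deg : P → ℕ) : Prop :=
  (∀ x : P, deg x ≤ 1) ∧
  ∀ x : P, deg x = 1 → ∃ a b : P, a ≠ b ∧ deg a = 0 ∧ deg b = 0 ∧
    a ⋖ x ∧ b ⋖ x ∧ ∀ y : P, y ⋖ x → y = a ∨ y = b

/-!
In `H_{M'}(P)` an element entered by an arrow has at most one out-neighbour: a vertex can only go
up to its partner, and an edge entered from its partner can only go down to its other endpoint.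
Hence a ray is determined by any of its elements after the first, and from some vertex on it is a
gradient path `v₀, e₀, v₁, e₁, …` with `(e_k, v_k) ∈ M'` and `e_k` covering `v_{k+1}`. Choose such
a tail in every class of rays; tails of distinct classes are disjoint. Rematching every `e_k` with
`v_{k+1}` instead of `v_k` frees exactly the first vertices `v₀` and reverses each tail: from a tail
element the only arrow now leads one step back towards `v₀`. So no ray or cycle of the new digraph
touches a tail, away from the tails nothing has changed, and every old ray meets a tail.
-/

lemma RayEquiv.symm {V : Type*} {r s : ℕ → V} (h : RayEquiv r s) : RayEquiv s r := by
  obtain ⟨m, n, h⟩ := h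
  exact ⟨n, m, fun i => (h i).symm⟩

lemma RayEquiv.trans {V : Type*} {r s u : ℕ → V} (hrs : RayEquiv r s) (hsu : RayEquiv s u) :
    RayEquiv r u := by
  obtain ⟨a, b, hrs⟩ := hrs
  obtain ⟨c, d, hsu⟩ := hsu
  refine ⟨a + c, d + b, fun i => ?_⟩
  calc r (a + c + i) = s (b + (c + i)) := by rw [← hrs, Nat.add_assoc]
    _ = s (c + (b + i)) := by rw [Nat.add_left_comm]
    _ = u (d + b + i) := by rw [hsu, Nat.add_assoc]

lemma IsPathOn.rel_mod {V : Type*} {A : V → V → Prop} {n : ℕ} {p : ℕ → V}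
    (hp : IsPathOn A n p) (hcl : A (p n) (p 0)) (m : ℕ) :
    A (p (m % (n + 1))) (p ((m + 1) % (n + 1))) := by
  rw [← Nat.mod_add_mod m (n + 1) 1]
  have hlt : m % (n + 1) < n + 1 := Nat.mod_lt m (by omega)
  rcases (show m % (n + 1) < n ∨ m % (n + 1) = n by omega) with h | h
  · rw [Nat.mod_eq_of_lt (a := m % (n + 1) + 1) (by omega)]
    exact hp.2 _ h
  · rwa [h, Nat.mod_self]

section Graded

variable {P : Type*} [PartialOrder P]

lemma IsMaxChainIn.mem_self {x : P} {C : Set P} (hC : IsMaxChainIn x C) : x ∈ C := by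
  have hins : IsChainIn x (insert x C) :=
    ⟨Set.insert_subset_iff.2 ⟨le_rfl, hC.1.1⟩,
      hC.1.2.insert fun b hb _ => Or.inr (hC.1.1 hb)⟩
  rw [hC.2 _ hins (Set.subset_insert x C)]
  exact Set.mem_insert x C

lemma exists_isMaxChainIn (x : P) : ∃ C, IsMaxChainIn x C := by
  obtain ⟨C, hC⟩ := zorn_subset {C : Set P | IsChainIn x C} fun c hc hchain => by
    refine ⟨⋃₀ c, ⟨Set.sUnion_subset fun s hs => (hc hs).1, ?_⟩,
      fun s hs => Set.subset_sUnion_of_mem hs⟩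
    rintro a ⟨s, hs, ha⟩ b ⟨t, ht, hb⟩ hab
    rcases hchain.total hs ht with hst | hts
    · exact (hc ht).2 (hst ha) hb hab
    · exact (hc hs).2 ha (hts hb) hab
  exact ⟨C, hC.prop, fun D hD hCD => hCD.antisymm (hC.2 hD hCD)⟩

lemma IsMaxChainIn.insert_of_covBy {x y : P} {C : Set P} (hC : IsMaxChainIn y C) (h : y ⋖ x) :
    IsMaxChainIn x (insert x C) := by
  have hCx : ∀ c ∈ C, c ≤ x := fun c hc => (hC.1.1 hc).trans h.le
  refine ⟨⟨Set.insert_subset_iff.2 ⟨le_rfl, hCx⟩,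
    hC.1.2.insert fun b hb _ => Or.inr (hCx b hb)⟩, fun D hD hCD => ?_⟩
  have hyD : y ∈ D := hCD (Set.mem_insert_of_mem x hC.mem_self)
  have hbelow : ∀ d ∈ D, d ≠ x → d ≤ y := by
    intro d hd hdx
    rcases eq_or_ne d y with rfl | hdy
    · exact le_rfl
    exact (hD.2 hd hyD hdy).resolve_right fun hyd =>
      h.2 (lt_of_le_of_ne hyd hdy.symm) (lt_of_le_of_ne (hD.1 hd) hdx)
  have hCD' : C = D \ {x} :=
    hC.2 _ ⟨fun d hd => hbelow d hd.1 hd.2, hD.2.mono Set.sdiff_subset⟩ fun c hc =>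
      ⟨hCD (Set.mem_insert_of_mem x hc), fun hcx => h.lt.not_ge (hcx ▸ hC.1.1 hc)⟩
  refine hCD.antisymm fun d hd => ?_
  by_cases hdx : d = x
  · exact hdx ▸ Set.mem_insert x C
  · exact Set.mem_insert_of_mem x (hCD' ▸ ⟨hd, hdx⟩)

lemma GradedDeg.deg_eq_of_covBy {deg : P → ℕ} (hg : GradedDeg deg) {x y : P} (h : y ⋖ x) :
    deg x = deg y + 1 := by
  obtain ⟨C, hC⟩ := exists_isMaxChainIn y
  obtain ⟨hfin, hcard⟩ := hg y C hC
  have hxC : x ∉ C := fun hx => h.lt.not_ge (hC.1.1 hx)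
  have := (hg x _ (hC.insert_of_covBy h)).2
  rw [Set.ncard_insert_of_notMem hxC hfin, hcard] at this
  omega

end Graded

section OneDim

variable {P : Type*} [PartialOrder P] {deg : P → ℕ} {M : Set (P × P)}

lemma IsMatching.mono {N : Set (P × P)} (hm : IsMatching M) (hNM : N ⊆ M) : IsMatching N :=
  ⟨fun e he => hm.1 e (hNM he), fun e he f hf => hm.2 e (hNM he) f (hNM hf)⟩

lemma IsMatching.union {N : Set (P × P)} (hM : IsMatching M) (hN : IsMatching N)
    (hdisj : ∀ e ∈ M, ∀ f ∈ N, e.1 ≠ f.1 ∧ e.1 ≠ f.2 ∧ e.2 ≠ f.1 ∧ e.2 ≠ f.2) :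
    IsMatching (M ∪ N) := by
  refine ⟨fun e he => he.elim (hM.1 e) (hN.1 e), ?_⟩
  rintro e (he | he) f (hf | hf) hef
  · exact hM.2 e he f hf hef
  · exact hdisj e he f hf
  · obtain ⟨h₁₁, h₁₂, h₂₁, h₂₂⟩ := hdisj f hf e he
    exact ⟨h₁₁.symm, h₂₁.symm, h₁₂.symm, h₂₂.symm⟩
  · exact hN.2 e he f hf hef

lemma IsMatching.left_unique (hm : IsMatching M) {a b c : P} (ha : (a, c) ∈ M)
    (hb : (b, c) ∈ M) : a = b :=
  by_contra fun hab => (hm.2 _ ha _ hb fun h => hab (congrArg Prod.fst h)).2.2.2 rfl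

lemma IsMatching.right_unique (hm : IsMatching M) {a b c : P} (hb : (a, b) ∈ M)
    (hc : (a, c) ∈ M) : b = c :=
  by_contra fun hbc => (hm.2 _ hb _ hc fun h => hbc (congrArg Prod.snd h)).1 rfl

lemma IsMatching.deg_of_mem (hg : GradedDeg deg) (hle : ∀ x, deg x ≤ 1) (hm : IsMatching M)
    {a b : P} (hab : (a, b) ∈ M) : deg a = 1 ∧ deg b = 0 := by
  have : deg a = deg b + 1 := hg.deg_eq_of_covBy (hm.1 _ hab)
  have := hle a
  omega

lemma OneDim.eq_of_covBy (h1 : OneDim deg) {e v w w' : P} (he : deg e = 1) (hv : v ⋖ e)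
    (hw : w ⋖ e) (hw' : w' ⋖ e) (hwv : w ≠ v) (hw'v : w' ≠ v) : w = w' := by
  obtain ⟨a, b, -, -, -, -, -, hab⟩ := h1.2 e he
  rcases hab v hv with rfl | rfl <;> rcases hab w hw with rfl | rfl <;>
    rcases hab w' hw' with rfl | rfl <;> simp_all

lemma HasseM.mem_of_deg_eq_zero (hg : GradedDeg deg) {v w : P} (h : HasseM M v w)
    (hv : deg v = 0) : (w, v) ∈ M := by
  refine h.resolve_left fun ⟨hwv, _⟩ => ?_
  have := hg.deg_eq_of_covBy hwv
  omega

lemma HasseM.mem_of_deg_eq_one (hg : GradedDeg deg) (hle : ∀ x, deg x ≤ 1) {a e : P}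
    (h : HasseM M a e) (he : deg e = 1) : (e, a) ∈ M := by
  refine h.resolve_left fun ⟨hea, _⟩ => ?_
  have := hg.deg_eq_of_covBy hea
  have := hle a
  omega

lemma HasseM.covBy_of_deg_eq_one (hg : GradedDeg deg) (hle : ∀ x, deg x ≤ 1)
    (hm : IsMatching M) {e w : P} (h : HasseM M e w) (he : deg e = 1) :
    w ⋖ e ∧ (e, w) ∉ M := by
  refine h.resolve_right fun hwe => ?_
  have : deg w = deg e + 1 := hg.deg_eq_of_covBy (hm.1 _ hwe)
  have := hle w
  omega

lemma hasseM_right_unique (hg : GradedDeg deg) (h1 : OneDim deg) (hm : IsMatching M)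
    {a b c c' : P} (hab : HasseM M a b) (hbc : HasseM M b c) (hbc' : HasseM M b c') :
    c = c' := by
  rcases Nat.le_one_iff_eq_zero_or_eq_one.mp (h1.1 b) with hb | hb
  · exact hm.left_unique (hbc.mem_of_deg_eq_zero hg hb) (hbc'.mem_of_deg_eq_zero hg hb)
  · have hba := hab.mem_of_deg_eq_one hg h1.1 hb
    obtain ⟨hcb, hbc⟩ := hbc.covBy_of_deg_eq_one hg h1.1 hm hb
    obtain ⟨hc'b, hbc'⟩ := hbc'.covBy_of_deg_eq_one hg h1.1 hm hb
    exact h1.eq_of_covBy hb (hm.1 _ hba) hcb hc'b (fun h => hbc (h ▸ hba))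
      (fun h => hbc' (h ▸ hba))

lemma IsRay.rayEquiv_of_apply_eq (hg : GradedDeg deg) (h1 : OneDim deg) (hm : IsMatching M)
    {r s : ℕ → P} (hr : IsRay (HasseM M) r) (hs : IsRay (HasseM M) s) {i j : ℕ} (hi : 0 < i)
    (hj : 0 < j) (hij : r i = s j) : RayEquiv r s := by
  obtain ⟨i, rfl⟩ : ∃ i', i = i' + 1 := ⟨i - 1, by omega⟩
  obtain ⟨j, rfl⟩ : ∃ j', j = j' + 1 := ⟨j - 1, by omega⟩
  refine ⟨i + 1, j + 1, fun k => ?_⟩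
  induction k with
  | zero => exact hij
  | succ k ih =>
    have hin : HasseM M (r (i + k)) (r (i + 1 + k)) := by
      rw [Nat.add_right_comm]
      exact hr.2 (i + k)
    have hout : HasseM M (r (i + 1 + k)) (s (j + 1 + k + 1)) := ih ▸ hs.2 (j + 1 + k)
    exact hasseM_right_unique hg h1 hm hin (hr.2 _) hout

lemma IsRay.exists_deg_succ_eq_zero (hg : GradedDeg deg) (hle : ∀ x, deg x ≤ 1)
    (hm : IsMatching M) {s : ℕ → P} (hs : IsRay (HasseM M) s) : ∃ t, deg (s (t + 1)) = 0 := by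
  rcases Nat.le_one_iff_eq_zero_or_eq_one.mp (hle (s 1)) with h | h
  · exact ⟨0, h⟩
  · have := hg.deg_eq_of_covBy ((hs.2 1).covBy_of_deg_eq_one hg hle hm h).1
    exact ⟨1, by omega⟩

end OneDim

section GradientPath

variable {P : Type*} [PartialOrder P] {deg : P → ℕ} {M : Set (P × P)}

/-- An infinite gradient path (V-path) of `M`, with its vertices at the even positions. -/
def IsVPath (M : Set (P × P)) (u : ℕ → P) : Prop :=
  ∀ k, (u (2 * k + 1), u (2 * k)) ∈ M ∧ u (2 * k + 2) ⋖ u (2 * k + 1)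

lemma IsVPath.deg_apply (hg : GradedDeg deg) (hle : ∀ x, deg x ≤ 1) (hm : IsMatching M)
    {u : ℕ → P} (hu : IsVPath M u) (j : ℕ) : deg (u j) = j % 2 := by
  obtain ⟨k, rfl | rfl⟩ := Nat.even_or_odd' j
  · rw [(hm.deg_of_mem hg hle (hu k).1).2]
    omega
  · rw [(hm.deg_of_mem hg hle (hu k).1).1]
    omega

lemma IsRay.isVPath_add (hg : GradedDeg deg) (hle : ∀ x, deg x ≤ 1) (hm : IsMatching M)
    {s : ℕ → P} (hs : IsRay (HasseM M) s) {t : ℕ} (ht : deg (s t) = 0) :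
    IsVPath M fun j => s (t + j) := by
  have hstep : ∀ n, deg (s n) = 0 →
      (s (n + 1), s n) ∈ M ∧ s (n + 2) ⋖ s (n + 1) ∧ deg (s (n + 2)) = 0 := by
    intro n hn
    have hmem := (hs.2 n).mem_of_deg_eq_zero hg hn
    have hdeg := (hm.deg_of_mem hg hle hmem).1
    have hcov : s (n + 2) ⋖ s (n + 1) := ((hs.2 (n + 1)).covBy_of_deg_eq_one hg hle hm hdeg).1
    have := hg.deg_eq_of_covBy hcov
    exact ⟨hmem, hcov, by omega⟩
  have hdeg : ∀ k, deg (s (t + 2 * k)) = 0 := by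
    intro k
    induction k with
    | zero => exact ht
    | succ k ih => exact (hstep _ ih).2.2
  exact fun k => ⟨(hstep _ (hdeg k)).1, (hstep _ (hdeg k)).2.1⟩

end GradientPath

lemma eq_iff_of_injective_uncurry {ι κ α : Type*} {r : ι → κ → α}
    (hinj : Function.Injective (Function.uncurry r)) {C C' : ι} {i j : κ} :
    r C i = r C' j ↔ C = C' ∧ i = j :=
  hinj.eq_iff.trans Prod.mk_inj

section Shift

variable {P : Type*} [PartialOrder P] {deg : P → ℕ} {M : Set (P × P)} {ι : Type*}
  {r : ι → ℕ → P}

/-- Along every tail `r C`, rematch `r C (2k+1)` with `r C (2k+2)` instead of `r C (2k)`. -/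
def shiftAlong (M : Set (P × P)) (r : ι → ℕ → P) : Set (P × P) :=
  {e ∈ M | e.1 ∉ Set.range (Function.uncurry r)} ∪
    Set.range fun q : ι × ℕ => (r q.1 (2 * q.2 + 1), r q.1 (2 * q.2 + 2))

lemma snd_notMem_range_of_mem (hg : GradedDeg deg) (hle : ∀ x, deg x ≤ 1) (hm : IsMatching M)
    (hv : ∀ C, IsVPath M (r C)) {a b : P} (hab : (a, b) ∈ M)
    (ha : a ∉ Set.range (Function.uncurry r)) : b ∉ Set.range (Function.uncurry r) := by
  rintro ⟨⟨C, j⟩, rfl⟩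
  change (a, r C j) ∈ M at hab
  have hj : j % 2 = 0 := by
    rw [← (hv C).deg_apply hg hle hm, (hm.deg_of_mem hg hle hab).2]
  obtain ⟨k, rfl⟩ : ∃ k, j = 2 * k := ⟨j / 2, by omega⟩
  exact ha ⟨(C, 2 * k + 1), hm.left_unique (hv C k).1 hab⟩

lemma isMatching_shiftAlong (hg : GradedDeg deg) (hle : ∀ x, deg x ≤ 1) (hm : IsMatching M)
    (hv : ∀ C, IsVPath M (r C)) (hinj : Function.Injective (Function.uncurry r)) :
    IsMatching (shiftAlong M r) := by
  refine (hm.mono (Set.sep_subset _ _)).union ⟨?_, ?_⟩ ?_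
  · rintro _ ⟨⟨C, k⟩, rfl⟩
    exact (hv C k).2
  · rintro _ ⟨⟨C, k⟩, rfl⟩ _ ⟨⟨C', k'⟩, rfl⟩ hne
    simp only [ne_eq, eq_iff_of_injective_uncurry hinj]
    refine ⟨?_, ?_, ?_, ?_⟩ <;> rintro ⟨rfl, h⟩ <;>
      first | omega | exact hne (by rw [show k = k' by omega])
  · rintro ⟨a, b⟩ ⟨hab, ha⟩ _ ⟨⟨C, k⟩, rfl⟩
    have hb := snd_notMem_range_of_mem hg hle hm hv hab ha
    exact ⟨fun h => ha ⟨(C, 2 * k + 1), h.symm⟩, fun h => ha ⟨(C, 2 * k + 2), h.symm⟩,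
      fun h => hb ⟨(C, 2 * k + 1), h.symm⟩, fun h => hb ⟨(C, 2 * k + 2), h.symm⟩⟩

lemma hasseM_shiftAlong_apply (hg : GradedDeg deg) (h1 : OneDim deg) (hm : IsMatching M)
    (hv : ∀ C, IsVPath M (r C)) (hinj : Function.Injective (Function.uncurry r)) {C : ι}
    {j : ℕ} {y : P} (h : HasseM (shiftAlong M r) (r C j) y) : ∃ i, j = i + 1 ∧ y = r C i := by
  rcases h with ⟨hy, hnot⟩ | (⟨hmem, hy⟩ | ⟨⟨C', k⟩, hq⟩)
  · have hj : j % 2 = 1 := by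
      have := hg.deg_eq_of_covBy hy
      have := (hv C).deg_apply hg h1.1 hm j
      have := h1.1 (r C j)
      omega
    obtain ⟨k, rfl⟩ : ∃ k, j = 2 * k + 1 := ⟨j / 2, by omega⟩
    refine ⟨2 * k, rfl, h1.eq_of_covBy (hm.deg_of_mem hg h1.1 (hv C k).1).1 (hv C k).2 hy
      (hm.1 _ (hv C k).1) ?_ ?_⟩
    · rintro rfl
      exact hnot (Or.inr ⟨(C, k), rfl⟩)
    · intro h
      have := ((eq_iff_of_injective_uncurry hinj).1 h).2
      omega
  · exact (snd_notMem_range_of_mem hg h1.1 hm hv hmem hy ⟨(C, j), rfl⟩).elim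
  · obtain ⟨hy, hC⟩ := Prod.mk_inj.1 hq
    obtain ⟨rfl, rfl⟩ := (eq_iff_of_injective_uncurry hinj).1 hC
    exact ⟨2 * k + 1, rfl, hy.symm⟩

lemma HasseM.of_shiftAlong {x y : P} (hx : x ∉ Set.range (Function.uncurry r))
    (hy : y ∉ Set.range (Function.uncurry r)) (h : HasseM (shiftAlong M r) x y) :
    HasseM M x y := by
  rcases h with ⟨hyx, hnot⟩ | (⟨hmem, -⟩ | ⟨q, hq⟩)
  · exact Or.inl ⟨hyx, fun hmem => hnot (Or.inl ⟨hmem, hx⟩)⟩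
  · exact Or.inr hmem
  · exact absurd ⟨(q.1, 2 * q.2 + 1), congrArg Prod.fst hq⟩ hy

lemma notMem_range_of_forall_hasseM_shiftAlong (hg : GradedDeg deg) (h1 : OneDim deg)
    (hm : IsMatching M) (hv : ∀ C, IsVPath M (r C))
    (hinj : Function.Injective (Function.uncurry r)) {g : ℕ → P}
    (hw : ∀ m, HasseM (shiftAlong M r) (g m) (g (m + 1))) :
    g 0 ∉ Set.range (Function.uncurry r) := by
  rintro ⟨⟨C, j⟩, hj⟩
  have hdesc : ∀ m, ∃ i, i + m = j ∧ g m = r C i := by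
    intro m
    induction m with
    | zero => exact ⟨j, rfl, hj.symm⟩
    | succ m ih =>
      obtain ⟨i, hi, hgm⟩ := ih
      obtain ⟨i', rfl, hi'⟩ := hasseM_shiftAlong_apply hg h1 hm hv hinj (hgm ▸ hw m)
      exact ⟨i', by omega, hi'⟩
  obtain ⟨i, hi, -⟩ := hdesc (j + 1)
  omega

theorem dAcyclic_hasseM_shiftAlong (hg : GradedDeg deg) (h1 : OneDim deg) (hm : IsMatching M)
    (hacyc : DAcyclic (HasseM M)) (hv : ∀ C, IsVPath M (r C))
    (hinj : Function.Injective (Function.uncurry r)) : DAcyclic (HasseM (shiftAlong M r)) := by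
  rintro ⟨n, p, hp, hcl⟩
  have hoff : ∀ i ≤ n, p i ∉ Set.range (Function.uncurry r) := by
    intro i hi
    have := notMem_range_of_forall_hasseM_shiftAlong hg h1 hm hv hinj
      (g := fun m => p ((i + m) % (n + 1))) fun m => hp.rel_mod hcl (i + m)
    rwa [Nat.add_zero, Nat.mod_eq_of_lt (by omega)] at this
  refine hacyc ⟨n, p, ⟨hp.1, fun i hi => ?_⟩, ?_⟩
  · exact (hp.2 i hi).of_shiftAlong (hoff i hi.le) (hoff (i + 1) hi)
  · exact hcl.of_shiftAlong (hoff n le_rfl) (hoff 0 (Nat.zero_le n))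

theorem rayless_hasseM_shiftAlong (hg : GradedDeg deg) (h1 : OneDim deg) (hm : IsMatching M)
    (hv : ∀ C, IsVPath M (r C)) (hinj : Function.Injective (Function.uncurry r))
    (hmeet : ∀ s, IsRay (HasseM M) s → ∃ i, s i ∈ Set.range (Function.uncurry r)) :
    Rayless (HasseM (shiftAlong M r)) := by
  rintro ⟨s, hsinj, hs⟩
  have hoff : ∀ i, s i ∉ Set.range (Function.uncurry r) := fun i =>
    notMem_range_of_forall_hasseM_shiftAlong hg h1 hm hv hinj (g := fun m => s (i + m))
      fun m => hs (i + m)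
  obtain ⟨i, hi⟩ := hmeet s ⟨hsinj, fun i => (hs i).of_shiftAlong (hoff i) (hoff (i + 1))⟩
  exact hoff i hi

theorem crit_shiftAlong (hg : GradedDeg deg) (hle : ∀ x, deg x ≤ 1) (hm : IsMatching M)
    (hv : ∀ C, IsVPath M (r C)) (hinj : Function.Injective (Function.uncurry r)) :
    Crit (shiftAlong M r) = Crit M ∪ Set.range fun C => r C 0 := by
  ext x
  refine ⟨fun hx => ?_, ?_⟩
  · by_contra hx'
    obtain ⟨hxM, hx0⟩ := not_or.1 hx'
    simp only [Crit, Critical, Set.mem_ofPred_eq, not_forall, not_and_or, not_not] at hxM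
    obtain ⟨⟨a, b⟩, hab, hx'⟩ := hxM
    by_cases ha : a ∈ Set.range (Function.uncurry r)
    · obtain ⟨⟨C, j⟩, rfl⟩ := ha
      change (r C j, b) ∈ M at hab
      have hj : j % 2 = 1 := by
        rw [← (hv C).deg_apply hg hle hm, (hm.deg_of_mem hg hle hab).1]
      obtain ⟨k, rfl⟩ : ∃ k, j = 2 * k + 1 := ⟨j / 2, by omega⟩
      obtain rfl : r C (2 * k) = b := hm.right_unique (hv C k).1 hab
      rcases hx' with rfl | rfl
      · exact (hx _ (Or.inr ⟨(C, k), rfl⟩)).1 rfl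
      · rcases k with _ | k
        · exact hx0 ⟨C, rfl⟩
        · exact (hx _ (Or.inr ⟨(C, k), rfl⟩)).2 rfl
    · have := hx _ (Or.inl ⟨hab, ha⟩)
      exact hx'.elim this.1 this.2
  · rintro (hx | ⟨C, rfl⟩) e (⟨he, he1⟩ | ⟨⟨C', k⟩, rfl⟩)
    · exact hx e he
    · exact ⟨(hx _ (hv C' k).1).1, (hx _ (hv C' (k + 1)).1).2⟩
    · exact ⟨fun h => he1 ⟨(C, 0), h.symm⟩,
        fun h => snd_notMem_range_of_mem hg hle hm hv he he1 ⟨(C, 0), h.symm⟩⟩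
    · constructor <;> intro h <;> have := ((eq_iff_of_injective_uncurry hinj).1 h).2 <;> omega

end Shift

theorem exists_vPath_tails {P : Type*} [PartialOrder P] {deg : P → ℕ} (hg : GradedDeg deg)
    (h1 : OneDim deg) {M : Set (P × P)} (hm : IsMatching M) :
    ∃ r : RayClasses (HasseM M) → ℕ → P, (∀ K, IsVPath M (r K)) ∧
      Function.Injective (Function.uncurry r) ∧
      ∀ s, IsRay (HasseM M) s → ∃ i, s i ∈ Set.range (Function.uncurry r) := by
  choose ρ hρ hK using fun K : RayClasses (HasseM M) => K.2
  choose t ht using fun K => (hρ K).exists_deg_succ_eq_zero hg h1.1 hm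
  refine ⟨fun K j => ρ K (t K + 1 + j), fun K => (hρ K).isVPath_add hg h1.1 hm (ht K), ?_, ?_⟩
  · rintro ⟨K, i⟩ ⟨K', j⟩ h
    have hequiv : RayEquiv (ρ K) (ρ K') :=
      (hρ K).rayEquiv_of_apply_eq hg h1 hm (hρ K') (by omega) (by omega) h
    obtain rfl : K = K' := Subtype.ext <| by
      rw [hK K, hK K']
      ext u
      exact and_congr_right fun _ => ⟨hequiv.symm.trans, hequiv.trans⟩
    have : t K + 1 + i = t K + 1 + j := (hρ K).1 h
    simp only [Prod.mk.injEq, true_and]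
    omega
  · intro s hs
    set K : RayClasses (HasseM M) := ⟨{u | IsRay (HasseM M) u ∧ RayEquiv s u}, s, hs, rfl⟩
    have hsK : s ∈ (K : Set (ℕ → P)) := ⟨hs, 0, 0, fun _ => rfl⟩
    rw [hK K] at hsK
    obtain ⟨a, b, hab⟩ := hsK.2
    refine ⟨b + (t K + 1), (K, a), ?_⟩
    rw [← hab]
    exact congrArg (ρ K) (Nat.add_comm _ _)

/-- on the face poset of a 1-dimensional regular CW-complex, any
Morse matching `M'` (with no finiteness assumption on the family of equivalence
classes of rays) may be replaced by a rayless Morse matching `M` whose critical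
elements are those of `M'` plus one new element of degree 0 for each
equivalence class of rays of `M'`. -/
theorem stmt7 {P : Type*} [PartialOrder P] (deg : P → ℕ) (hgraded : GradedDeg deg)
    (h1 : OneDim deg) (M' : Set (P × P)) (hM' : IsMorse M') :
    ∃ M : Set (P × P), IsMorse M ∧ Rayless (HasseM M) ∧
      ∃ c : RayClasses (HasseM M') → P, Function.Injective c ∧
        (∀ K : RayClasses (HasseM M'), c K ∉ Crit M') ∧
        (∀ K : RayClasses (HasseM M'), deg (c K) = 0) ∧
        Crit M = Crit M' ∪ Set.range c := by
  obtain ⟨hm, hacyc⟩ := hM'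
  obtain ⟨r, hv, hinj, hmeet⟩ := exists_vPath_tails hgraded h1 hm
  refine ⟨shiftAlong M' r,
    ⟨isMatching_shiftAlong hgraded h1.1 hm hv hinj,
      dAcyclic_hasseM_shiftAlong hgraded h1 hm hacyc hv hinj⟩,
    rayless_hasseM_shiftAlong hgraded h1 hm hv hinj hmeet, fun K => r K 0,
    fun K K' h => ((eq_iff_of_injective_uncurry hinj).1 h).1,
    fun K hK => (hK _ (hv K 0).1).2 rfl, fun K => (hv K).deg_apply hgraded h1.1 hm 0,
    crit_shiftAlong hgraded h1.1 hm hv hinj⟩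
end
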